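/- If A₁⊕B₁ and A₂⊕B₂ are block-diagonal weighing matrices of the same weight w with blocks of matching sizes, then A₁⊕B₁ is unbiased with A₂⊕B₂ if and only if A₁ is unbiased with A₂ and B₁ is unbiased with B₂. -/

import Mathlib

/-! The product `H * Kᴴ` of two block-diagonal matrices is block-diagonal, blockwise.
If it equals `√w • L` with `L` a unit weighing matrix, the off-diagonal blocks of `L` vanish:
for `w ≠ 0` by cancelling `√w`, and for `w = 0` because `L * Lᴴ = 0` forces `L = 0`.
So `L` is itself block-diagonal and its two blocks witness the unbiasedness of the summands;
conversely the direct sum of two witnesses is a witness for the direct sums. -/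

open Matrix

def IsUnitWeighing {α : Type*} [Fintype α] [DecidableEq α] (w : ℕ)
    (W : Matrix α α ℂ) : Prop :=
  (∀ i j, W i j = 0 ∨ ‖W i j‖ = 1) ∧ W * Wᴴ = (w : ℂ) • 1

def Unbiased {α : Type*} [Fintype α] [DecidableEq α] (w : ℕ)
    (H K : Matrix α α ℂ) : Prop :=
  ∃ L, IsUnitWeighing w L ∧ H * Kᴴ = (Real.sqrt w : ℂ) • L

variable {α β : Type*} [Fintype α] [Fintype β] {w : ℕ}

lemma fromBlocks_diagonal_mul_conjTranspose (A₁ A₂ : Matrix α α ℂ) (B₁ B₂ : Matrix β β ℂ) :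
    fromBlocks A₁ 0 0 B₁ * (fromBlocks A₂ 0 0 B₂)ᴴ = fromBlocks (A₁ * A₂ᴴ) 0 0 (B₁ * B₂ᴴ) := by
  simp [fromBlocks_conjTranspose, fromBlocks_multiply]

variable [DecidableEq α] [DecidableEq β]

lemma isUnitWeighing_fromBlocks_iff {A : Matrix α α ℂ} {B : Matrix β β ℂ} :
    IsUnitWeighing w (fromBlocks A 0 0 B) ↔ IsUnitWeighing w A ∧ IsUnitWeighing w B := by
  have hscalar : (w : ℂ) • (1 : Matrix (α ⊕ β) (α ⊕ β) ℂ) =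
      fromBlocks ((w : ℂ) • (1 : Matrix α α ℂ)) 0 0 ((w : ℂ) • (1 : Matrix β β ℂ)) := by
    simp only [← fromBlocks_one, fromBlocks_smul, smul_zero]
  simp only [IsUnitWeighing, fromBlocks_diagonal_mul_conjTranspose, hscalar, fromBlocks_inj,
    Sum.forall, fromBlocks_apply₁₁, fromBlocks_apply₁₂, fromBlocks_apply₂₁, fromBlocks_apply₂₂,
    Matrix.zero_apply, true_or, implies_true, and_true, true_and]
  tauto

lemma IsUnitWeighing.eq_zero_of_weight_zero {L : Matrix α α ℂ} (hL : IsUnitWeighing 0 L) :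
    L = 0 := by
  open scoped ComplexOrder in
  exact self_mul_conjTranspose_eq_zero.mp (by simpa using hL.2)

lemma IsUnitWeighing.offDiagonal_eq_zero {L : Matrix (α ⊕ β) (α ⊕ β) ℂ}
    (hL : IsUnitWeighing w L) {A : Matrix α α ℂ} {B : Matrix β β ℂ}
    (h : (Real.sqrt w : ℂ) • L = fromBlocks A 0 0 B) :
    L.toBlocks₁₂ = 0 ∧ L.toBlocks₂₁ = 0 := by
  rcases eq_or_ne w 0 with rfl | hw
  · rw [hL.eq_zero_of_weight_zero]
    exact ⟨rfl, rfl⟩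
  have hsqrt : (Real.sqrt w : ℂ) ≠ 0 := by
    exact_mod_cast Real.sqrt_ne_zero'.mpr (by positivity)
  rw [← fromBlocks_toBlocks L, fromBlocks_smul, fromBlocks_inj] at h
  exact ⟨(smul_eq_zero.mp h.2.1).resolve_left hsqrt, (smul_eq_zero.mp h.2.2.1).resolve_left hsqrt⟩

theorem unbiased_fromBlocks_iff (A₁ A₂ : Matrix α α ℂ) (B₁ B₂ : Matrix β β ℂ) :
    Unbiased w (fromBlocks A₁ 0 0 B₁) (fromBlocks A₂ 0 0 B₂) ↔
      Unbiased w A₁ A₂ ∧ Unbiased w B₁ B₂ := by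
  rw [Unbiased, fromBlocks_diagonal_mul_conjTranspose]
  constructor
  · rintro ⟨L, hL, hprod⟩
    obtain ⟨h₁₂, h₂₁⟩ := hL.offDiagonal_eq_zero hprod.symm
    rw [← fromBlocks_toBlocks L, h₁₂, h₂₁] at hL hprod
    rw [fromBlocks_smul, smul_zero, fromBlocks_inj] at hprod
    obtain ⟨hLA, hLB⟩ := isUnitWeighing_fromBlocks_iff.mp hL
    exact ⟨⟨_, hLA, hprod.1⟩, ⟨_, hLB, hprod.2.2.2⟩⟩
  · rintro ⟨⟨LA, hLA, hA⟩, ⟨LB, hLB, hB⟩⟩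
    refine ⟨fromBlocks LA 0 0 LB, isUnitWeighing_fromBlocks_iff.mpr ⟨hLA, hLB⟩, ?_⟩
    simp only [hA, hB, fromBlocks_smul, smul_zero]

theorem stmt_2 {m n w : ℕ}
    (A₁ A₂ : Matrix (Fin m) (Fin m) ℂ) (B₁ B₂ : Matrix (Fin n) (Fin n) ℂ) :
    Unbiased w (Matrix.fromBlocks A₁ 0 0 B₁) (Matrix.fromBlocks A₂ 0 0 B₂) ↔
      Unbiased w A₁ A₂ ∧ Unbiased w B₁ B₂ :=
  unbiased_fromBlocks_iff A₁ A₂ B₁ B₂
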